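/- Noncommutation of the wave operator with null components generates only lower-order terms: writing a symmetric 2-tensor as h·dq² with dq = dr − dt = cos θ dx¹ + sin θ dx² − dt on ℝ^{1+2}, one has, for any smooth scalar h and any cutoff Υ(r/t), (□(Υ(r/t) h dq²))_{μν} − (□(Υ(r/t) h))·(dq²)_{μν} = Υ(r/t) r^{−2} (u¹_{μν}(θ) h + u²_{μν}(θ) ∂_θ h) for some fixed trigonometric-polynomial functions u¹_{μν}, u²_{μν} of θ. -/

import Mathlib

noncomputable section

/-- Spacetime point `(t, x₁, x₂)` in `ℝ^{2+1}`. -/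
abbrev Pt : Type := ℝ × ℝ × ℝ

def rad (p : Pt) : ℝ := Real.sqrt (p.2.1 ^ 2 + p.2.2 ^ 2)

/-- Derivative of `u` along the constant vector `v`. -/
def pd (v : Pt) (u : Pt → ℝ) : Pt → ℝ := fun p => fderiv ℝ u p v

def e0 : Pt := (1, 0, 0)
def e1 : Pt := (0, 1, 0)
def e2 : Pt := (0, 0, 1)

/-- The flat d'Alembertian `□u = -∂_t²u + ∂_1²u + ∂_2²u` on `ℝ^{2+1}`, applied
componentwise in the Cartesian frame. -/
def Box (u : Pt → ℝ) : Pt → ℝ := fun p =>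
  -pd e0 (pd e0 u) p + pd e1 (pd e1 u) p + pd e2 (pd e2 u) p

/-- The Cartesian components of the covector `dq = cos θ dx¹ + sin θ dx² − dt`. -/
def covq (i : Fin 3) (p : Pt) : ℝ := ![(-1 : ℝ), p.2.1 / rad p, p.2.2 / rad p] i

/-- The full angular derivative `∂_θ h = (−x₂∂_1 + x₁∂_2)h`. -/
def dThetaFull (h : Pt → ℝ) (p : Pt) : ℝ := fderiv ℝ h p (0, -p.2.2, p.2.1)

namespace S14

open MvPolynomial

/-- coordinate CLMs -/
def lt : Pt →L[ℝ] ℝ := ContinuousLinearMap.fst ℝ ℝ (ℝ × ℝ)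
def lx : Pt →L[ℝ] ℝ := (ContinuousLinearMap.fst ℝ ℝ ℝ).comp (ContinuousLinearMap.snd ℝ ℝ (ℝ × ℝ))
def ly : Pt →L[ℝ] ℝ := (ContinuousLinearMap.snd ℝ ℝ ℝ).comp (ContinuousLinearMap.snd ℝ ℝ (ℝ × ℝ))

@[simp] lemma lt_apply (v : Pt) : lt v = v.1 := rfl
@[simp] lemma lx_apply (v : Pt) : lx v = v.2.1 := rfl
@[simp] lemma ly_apply (v : Pt) : ly v = v.2.2 := rfl

def sq (p : Pt) : ℝ := p.2.1 ^ 2 + p.2.2 ^ 2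

lemma sq_nonneg' (p : Pt) : 0 ≤ sq p := by unfold sq; positivity

lemma rad_nonneg (p : Pt) : 0 ≤ rad p := Real.sqrt_nonneg _

lemma rad_sq (p : Pt) : rad p ^ 2 = sq p := Real.sq_sqrt (sq_nonneg' p)

lemma sq_ne {p : Pt} (hp : rad p ≠ 0) : sq p ≠ 0 := by
  intro h
  apply hp
  simp [rad, show p.2.1 ^ 2 + p.2.2 ^ 2 = sq p from rfl, h]

lemma rad_pos {p : Pt} (hp : rad p ≠ 0) : 0 < rad p := lt_of_le_of_ne (rad_nonneg p) (Ne.symm hp)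

lemma hasF_x (p : Pt) : HasFDerivAt (fun q : Pt => q.2.1) lx p := lx.hasFDerivAt
lemma hasF_y (p : Pt) : HasFDerivAt (fun q : Pt => q.2.2) ly p := ly.hasFDerivAt
lemma hasF_t (p : Pt) : HasFDerivAt (fun q : Pt => q.1) lt p := lt.hasFDerivAt

lemma hasF_sq (p : Pt) :
    HasFDerivAt sq (p.2.1 • lx + p.2.1 • lx + (p.2.2 • ly + p.2.2 • ly)) p := by
  have h : sq = fun q : Pt => q.2.1 * q.2.1 + q.2.2 * q.2.2 := by
    funext q; simp [sq]; ring
  rw [h]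
  exact ((hasF_x p).mul (hasF_x p)).add ((hasF_y p).mul (hasF_y p))

lemma hasF_rad {p : Pt} (hp : rad p ≠ 0) :
    HasFDerivAt rad
      ((1 / (2 * rad p)) • (p.2.1 • lx + p.2.1 • lx + (p.2.2 • ly + p.2.2 • ly))) p :=
  (hasF_sq p).sqrt (sq_ne hp)

def c1 (p : Pt) : ℝ := p.2.1 / rad p
def c2 (p : Pt) : ℝ := p.2.2 / rad p

lemma c1_mul_inv : c1 = fun p : Pt => p.2.1 * (rad p)⁻¹ := by
  funext p; simp [c1, div_eq_mul_inv]

lemma c2_mul_inv : c2 = fun p : Pt => p.2.2 * (rad p)⁻¹ := by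
  funext p; simp [c2, div_eq_mul_inv]

lemma hasF_c1 {p : Pt} (hp : rad p ≠ 0) :
    HasFDerivAt c1
      (p.2.1 • ((-(rad p ^ 2)⁻¹) •
          ((1 / (2 * rad p)) • (p.2.1 • lx + p.2.1 • lx + (p.2.2 • ly + p.2.2 • ly))))
        + (rad p)⁻¹ • lx) p := by
  rw [c1_mul_inv]
  exact (hasF_x p).mul ((hasDerivAt_inv hp).comp_hasFDerivAt p (hasF_rad hp))

lemma hasF_c2 {p : Pt} (hp : rad p ≠ 0) :
    HasFDerivAt c2
      (p.2.2 • ((-(rad p ^ 2)⁻¹) •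
          ((1 / (2 * rad p)) • (p.2.1 • lx + p.2.1 • lx + (p.2.2 • ly + p.2.2 • ly))))
        + (rad p)⁻¹ • ly) p := by
  rw [c2_mul_inv]
  exact (hasF_y p).mul ((hasDerivAt_inv hp).comp_hasFDerivAt p (hasF_rad hp))

lemma fderiv_c1_apply {p : Pt} (hp : rad p ≠ 0) (v : Pt) :
    fderiv ℝ c1 p v
      = v.2.1 / rad p - p.2.1 * (p.2.1 * v.2.1 + p.2.2 * v.2.2) / rad p ^ 3 := by
  rw [(hasF_c1 hp).fderiv]
  simp
  field_simp
  ring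

lemma fderiv_c2_apply {p : Pt} (hp : rad p ≠ 0) (v : Pt) :
    fderiv ℝ c2 p v
      = v.2.2 / rad p - p.2.2 * (p.2.1 * v.2.1 + p.2.2 * v.2.2) / rad p ^ 3 := by
  rw [(hasF_c2 hp).fderiv]
  simp
  field_simp
  ring

lemma diff_c1 {p : Pt} (hp : rad p ≠ 0) : DifferentiableAt ℝ c1 p :=
  (hasF_c1 hp).differentiableAt

lemma diff_c2 {p : Pt} (hp : rad p ≠ 0) : DifferentiableAt ℝ c2 p :=
  (hasF_c2 hp).differentiableAt

/-- the open set where `rad ≠ 0` -/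
def U : Set Pt := {q | rad q ≠ 0}

lemma isOpen_U : IsOpen U := by
  have : Continuous rad := by
    have : Continuous sq := by unfold sq; fun_prop
    exact Real.continuous_sqrt.comp this
  exact isOpen_ne.preimage this |>.mono (by rfl) |>.mono (by rfl)

lemma U_mem_nhds {p : Pt} (hp : rad p ≠ 0) : U ∈ nhds p :=
  isOpen_U.mem_nhds hp

lemma cda_rad {p : Pt} (hp : rad p ≠ 0) : ContDiffAt ℝ 2 rad p := by
  have hsq : ContDiffAt ℝ 2 sq p := by unfold sq; fun_prop
  exact hsq.sqrt (sq_ne hp)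

lemma cda_c1 {p : Pt} (hp : rad p ≠ 0) : ContDiffAt ℝ 2 c1 p := by
  rw [c1_mul_inv]
  exact (contDiffAt_snd.fst).mul ((cda_rad hp).inv hp)

lemma cda_c2 {p : Pt} (hp : rad p ≠ 0) : ContDiffAt ℝ 2 c2 p := by
  rw [c2_mul_inv]
  exact (contDiffAt_snd.snd).mul ((cda_rad hp).inv hp)


lemma rad_sq' (q : Pt) : rad q ^ 2 = q.2.1 ^ 2 + q.2.2 ^ 2 := rad_sq q

lemma pd_e0_c1 {q : Pt} (hq : rad q ≠ 0) : pd e0 c1 q = 0 := by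
  rw [pd, fderiv_c1_apply hq]
  simp [e0]

lemma pd_e0_c2 {q : Pt} (hq : rad q ≠ 0) : pd e0 c2 q = 0 := by
  rw [pd, fderiv_c2_apply hq]
  simp [e0]

lemma pd_e1_c1 {q : Pt} (hq : rad q ≠ 0) :
    pd e1 c1 q = q.2.2 * q.2.2 * (rad q ^ 3)⁻¹ := by
  rw [pd, fderiv_c1_apply hq]
  simp only [e1]
  have h := rad_sq' q
  have h0 := rad_pos hq
  field_simp
  linear_combination h

lemma pd_e2_c1 {q : Pt} (hq : rad q ≠ 0) :
    pd e2 c1 q = -(q.2.1 * q.2.2) * (rad q ^ 3)⁻¹ := by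
  rw [pd, fderiv_c1_apply hq]
  simp only [e2]
  field_simp
  try ring

lemma pd_e1_c2 {q : Pt} (hq : rad q ≠ 0) :
    pd e1 c2 q = -(q.2.1 * q.2.2) * (rad q ^ 3)⁻¹ := by
  rw [pd, fderiv_c2_apply hq]
  simp only [e1]
  field_simp
  try ring

lemma pd_e2_c2 {q : Pt} (hq : rad q ≠ 0) :
    pd e2 c2 q = q.2.1 * q.2.1 * (rad q ^ 3)⁻¹ := by
  rw [pd, fderiv_c2_apply hq]
  simp only [e2]
  have h := rad_sq' q
  have h0 := rad_pos hq
  field_simp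
  linear_combination h

lemma hasF_rad3inv {p : Pt} (hp : rad p ≠ 0) :
    HasFDerivAt (fun q => (rad q ^ 3)⁻¹)
      ((-((rad p ^ 3) ^ 2)⁻¹) • ((3 * rad p ^ (3 - 1)) •
        ((1 / (2 * rad p)) • (p.2.1 • lx + p.2.1 • lx + (p.2.2 • ly + p.2.2 • ly))))) p := by
  have h3 : HasFDerivAt (fun q => rad q ^ 3)
      ((3 * rad p ^ (3 - 1)) •
        ((1 / (2 * rad p)) • (p.2.1 • lx + p.2.1 • lx + (p.2.2 • ly + p.2.2 • ly)))) p := by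
    have := (hasDerivAt_pow 3 (rad p)).comp_hasFDerivAt p (hasF_rad hp)
    simpa [Function.comp_def] using this
  exact (hasDerivAt_inv (pow_ne_zero 3 hp)).comp_hasFDerivAt p h3

lemma fderiv_over_rad3 {p : Pt} {A : Pt → ℝ} {A' : Pt →L[ℝ] ℝ}
    (hA : HasFDerivAt A A' p) (hp : rad p ≠ 0) (v : Pt) :
    fderiv ℝ (fun q => A q * (rad q ^ 3)⁻¹) p v
      = A' v / rad p ^ 3
        - 3 * A p * (p.2.1 * v.2.1 + p.2.2 * v.2.2) / rad p ^ 5 := by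
  rw [(hA.fun_mul (hasF_rad3inv hp)).fderiv]
  have h0 := rad_pos hp
  simp
  field_simp
  ring

lemma Box_c1 {p : Pt} (hp : rad p ≠ 0) : Box c1 p = -(c1 p) / rad p ^ 2 := by
  have h0 : pd e0 (pd e0 c1) p = 0 := by
    have heq : pd e0 c1 =ᶠ[nhds p] fun _ => (0 : ℝ) := by
      filter_upwards [U_mem_nhds hp] with q hq
      exact pd_e0_c1 hq
    rw [pd, heq.fderiv_eq]
    simp
  have h1 : pd e1 (pd e1 c1) p
      = -3 * p.2.1 * (p.2.2 * p.2.2) / rad p ^ 5 := by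
    have heq : pd e1 c1 =ᶠ[nhds p] fun q => q.2.2 * q.2.2 * (rad q ^ 3)⁻¹ := by
      filter_upwards [U_mem_nhds hp] with q hq
      exact pd_e1_c1 hq
    rw [pd, heq.fderiv_eq, fderiv_over_rad3 ((hasF_y p).fun_mul (hasF_y p)) hp]
    simp [e1]
    ring
  have h2 : pd e2 (pd e2 c1) p
      = -(p.2.1) / rad p ^ 3 + 3 * p.2.1 * (p.2.2 * p.2.2) / rad p ^ 5 := by
    have heq : pd e2 c1 =ᶠ[nhds p] fun q => -(q.2.1 * q.2.2) * (rad q ^ 3)⁻¹ := by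
      filter_upwards [U_mem_nhds hp] with q hq
      exact pd_e2_c1 hq
    rw [pd, heq.fderiv_eq,
      fderiv_over_rad3 (((hasF_x p).fun_mul (hasF_y p)).fun_neg) hp]
    simp [e2]
    ring
  rw [Box, h0, h1, h2, c1]
  have h0' := rad_pos hp
  field_simp
  ring

lemma Box_c2 {p : Pt} (hp : rad p ≠ 0) : Box c2 p = -(c2 p) / rad p ^ 2 := by
  have h0 : pd e0 (pd e0 c2) p = 0 := by
    have heq : pd e0 c2 =ᶠ[nhds p] fun _ => (0 : ℝ) := by
      filter_upwards [U_mem_nhds hp] with q hq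
      exact pd_e0_c2 hq
    rw [pd, heq.fderiv_eq]
    simp
  have h1 : pd e1 (pd e1 c2) p
      = -(p.2.2) / rad p ^ 3 + 3 * p.2.2 * (p.2.1 * p.2.1) / rad p ^ 5 := by
    have heq : pd e1 c2 =ᶠ[nhds p] fun q => -(q.2.1 * q.2.2) * (rad q ^ 3)⁻¹ := by
      filter_upwards [U_mem_nhds hp] with q hq
      exact pd_e1_c2 hq
    rw [pd, heq.fderiv_eq,
      fderiv_over_rad3 (((hasF_x p).fun_mul (hasF_y p)).fun_neg) hp]
    simp [e1]
    ring
  have h2 : pd e2 (pd e2 c2) p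
      = -3 * p.2.2 * (p.2.1 * p.2.1) / rad p ^ 5 := by
    have heq : pd e2 c2 =ᶠ[nhds p] fun q => q.2.1 * q.2.1 * (rad q ^ 3)⁻¹ := by
      filter_upwards [U_mem_nhds hp] with q hq
      exact pd_e2_c2 hq
    rw [pd, heq.fderiv_eq, fderiv_over_rad3 ((hasF_x p).fun_mul (hasF_x p)) hp]
    simp [e2]
    ring
  rw [Box, h0, h1, h2, c2]
  have h0' := rad_pos hp
  field_simp
  ring


lemma eventually_diff {p : Pt} {u : Pt → ℝ} (hu : ContDiffAt ℝ 2 u p) :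
    ∀ᶠ q in nhds p, DifferentiableAt ℝ u q := by
  have h2 : (2 : WithTop ℕ∞) ≠ (⊤ : ℕ∞) := by
    intro h
    exact (by norm_num : (2 : WithTop ℕ∞) ≠ ((⊤:ℕ∞) : WithTop ℕ∞)) h
  exact (hu.eventually h2).mono fun q hq => hq.differentiableAt two_ne_zero

lemma diff_pd {p : Pt} (v : Pt) {u : Pt → ℝ} (hu : ContDiffAt ℝ 2 u p) :
    DifferentiableAt ℝ (pd v u) p := by
  have h1 : ContDiffAt ℝ 1 (fderiv ℝ u) p := hu.fderiv_right (by norm_num)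
  have h2 : DifferentiableAt ℝ (fderiv ℝ u) p := h1.differentiableAt one_ne_zero
  exact ((ContinuousLinearMap.apply ℝ ℝ v).differentiable.differentiableAt).comp p h2

lemma pd_pd_mul (v : Pt) {p : Pt} {u g : Pt → ℝ}
    (hu : ContDiffAt ℝ 2 u p) (hg : ContDiffAt ℝ 2 g p) :
    pd v (pd v fun q => u q * g q) p
      = pd v (pd v u) p * g p + 2 * (pd v u p * pd v g p) + u p * pd v (pd v g) p := by
  have heq : (pd v fun q => u q * g q) =ᶠ[nhds p]
      fun q => pd v u q * g q + u q * pd v g q := by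
    filter_upwards [eventually_diff hu, eventually_diff hg] with q h1 h2
    show fderiv ℝ (fun q => u q * g q) q v = _
    rw [fderiv_fun_mul h1 h2]
    simp [pd]
    ring
  have hdu : DifferentiableAt ℝ (pd v u) p := diff_pd v hu
  have hdg : DifferentiableAt ℝ (pd v g) p := diff_pd v hg
  have hu1 : DifferentiableAt ℝ u p := hu.differentiableAt two_ne_zero
  have hg1 : DifferentiableAt ℝ g p := hg.differentiableAt two_ne_zero
  have : pd v (pd v fun q => u q * g q) p
      = fderiv ℝ (fun q => pd v u q * g q + u q * pd v g q) p v := by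
    show fderiv ℝ (pd v fun q => u q * g q) p v = _
    rw [heq.fderiv_eq]
  rw [this, fderiv_fun_add (by exact hdu.mul hg1) (by exact hu1.mul hdg)]
  rw [ContinuousLinearMap.add_apply, fderiv_fun_mul hdu hg1, fderiv_fun_mul hu1 hdg]
  show (pd v u p * fderiv ℝ g p v + g p * fderiv ℝ (pd v u) p v)
      + (u p * fderiv ℝ (pd v g) p v + pd v g p * fderiv ℝ u p v) = _
  show (pd v u p * pd v g p + g p * pd v (pd v u) p)
      + (u p * pd v (pd v g) p + pd v g p * pd v u p) = _
  ring

lemma Box_mul {p : Pt} {u g : Pt → ℝ}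
    (hu : ContDiffAt ℝ 2 u p) (hg : ContDiffAt ℝ 2 g p) :
    Box (fun q => u q * g q) p
      = Box u p * g p
        + 2 * (-(pd e0 u p * pd e0 g p) + pd e1 u p * pd e1 g p + pd e2 u p * pd e2 g p)
        + u p * Box g p := by
  rw [Box, Box, Box, pd_pd_mul e0 hu hg, pd_pd_mul e1 hu hg, pd_pd_mul e2 hu hg]
  ring

lemma pd_pd_add (v : Pt) {p : Pt} {u g : Pt → ℝ}
    (hu : ContDiffAt ℝ 2 u p) (hg : ContDiffAt ℝ 2 g p) :
    pd v (pd v fun q => u q + g q) p = pd v (pd v u) p + pd v (pd v g) p := by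
  have heq : (pd v fun q => u q + g q) =ᶠ[nhds p]
      fun q => pd v u q + pd v g q := by
    filter_upwards [eventually_diff hu, eventually_diff hg] with q h1 h2
    show fderiv ℝ (fun q => u q + g q) q v = _
    rw [fderiv_fun_add h1 h2]
    simp [pd]
  have hdu : DifferentiableAt ℝ (pd v u) p := diff_pd v hu
  have hdg : DifferentiableAt ℝ (pd v g) p := diff_pd v hg
  have h2 : pd v (pd v fun q => u q + g q) p
      = fderiv ℝ (fun q => pd v u q + pd v g q) p v := by
    show fderiv ℝ (pd v fun q => u q + g q) p v = _
    rw [heq.fderiv_eq]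
  rw [h2, fderiv_fun_add hdu hdg]
  rfl

lemma Box_add {p : Pt} {u g : Pt → ℝ}
    (hu : ContDiffAt ℝ 2 u p) (hg : ContDiffAt ℝ 2 g p) :
    Box (fun q => u q + g q) p = Box u p + Box g p := by
  rw [Box, Box, Box, pd_pd_add e0 hu hg, pd_pd_add e1 hu hg, pd_pd_add e2 hu hg]
  ring


lemma dTheta_eq {p : Pt} {u : Pt → ℝ} (hu : DifferentiableAt ℝ u p) :
    dThetaFull u p = -p.2.2 * pd e1 u p + p.2.1 * pd e2 u p := by
  have hv : ((0, -p.2.2, p.2.1) : Pt) = (-p.2.2) • e1 + p.2.1 • e2 := by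
    simp [e1, e2, Prod.ext_iff]
  rw [dThetaFull, hv, map_add, map_smul, map_smul]
  show (-p.2.2) • fderiv ℝ u p e1 + p.2.1 • fderiv ℝ u p e2 = _
  simp [pd]
  try ring

lemma dTheta_c1 {p : Pt} (hp : rad p ≠ 0) : dThetaFull c1 p = -(c2 p) := by
  rw [dTheta_eq (diff_c1 hp), pd_e1_c1 hp, pd_e2_c1 hp, c2]
  have h0 := rad_pos hp
  have h := rad_sq' p
  field_simp
  linear_combination p.2.2 * h

lemma dTheta_c2 {p : Pt} (hp : rad p ≠ 0) : dThetaFull c2 p = c1 p := by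
  rw [dTheta_eq (diff_c2 hp), pd_e1_c2 hp, pd_e2_c2 hp, c1]
  have h0 := rad_pos hp
  have h := rad_sq' p
  field_simp
  linear_combination (-(p.2.1)) * h

lemma dTheta_mul {p : Pt} {u g : Pt → ℝ}
    (hu : DifferentiableAt ℝ u p) (hg : DifferentiableAt ℝ g p) :
    dThetaFull (fun q => u q * g q) p
      = dThetaFull u p * g p + u p * dThetaFull g p := by
  rw [dThetaFull, fderiv_fun_mul hu hg]
  show u p • fderiv ℝ g p (0, -p.2.2, p.2.1) + g p • fderiv ℝ u p (0, -p.2.2, p.2.1) = _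
  rw [dThetaFull, dThetaFull]
  simp
  ring

lemma Box_mul_c1 {p : Pt} {u : Pt → ℝ} (hu : ContDiffAt ℝ 2 u p) (hp : rad p ≠ 0) :
    Box (fun q => u q * c1 q) p
      = Box u p * c1 p - 2 * c2 p * dThetaFull u p / rad p ^ 2
        - u p * c1 p / rad p ^ 2 := by
  rw [Box_mul hu (cda_c1 hp), Box_c1 hp, pd_e0_c1 hp, pd_e1_c1 hp, pd_e2_c1 hp,
    dTheta_eq (hu.differentiableAt two_ne_zero), c1, c2]
  have h0 := rad_pos hp
  field_simp
  ring

lemma Box_mul_c2 {p : Pt} {u : Pt → ℝ} (hu : ContDiffAt ℝ 2 u p) (hp : rad p ≠ 0) :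
    Box (fun q => u q * c2 q) p
      = Box u p * c2 p + 2 * c1 p * dThetaFull u p / rad p ^ 2
        - u p * c2 p / rad p ^ 2 := by
  rw [Box_mul hu (cda_c2 hp), Box_c2 hp, pd_e0_c2 hp, pd_e1_c2 hp, pd_e2_c2 hp,
    dTheta_eq (hu.differentiableAt two_ne_zero), c1, c2]
  have h0 := rad_pos hp
  field_simp
  ring


lemma dTheta_add {p : Pt} {u g : Pt → ℝ}
    (hu : DifferentiableAt ℝ u p) (hg : DifferentiableAt ℝ g p) :
    dThetaFull (fun q => u q + g q) p = dThetaFull u p + dThetaFull g p := by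
  rw [dThetaFull, fderiv_fun_add hu hg, dThetaFull, dThetaFull]
  simp

/-- the angular derivative on polynomials in (cos θ, sin θ) -/
def Dθ (P : MvPolynomial (Fin 2) ℝ) : MvPolynomial (Fin 2) ℝ :=
  X 0 * pderiv 1 P - X 1 * pderiv 0 P

lemma Dθ_C (a : ℝ) : Dθ (C a) = 0 := by simp [Dθ]

lemma Dθ_zero : Dθ 0 = 0 := by simp [Dθ]

lemma Dθ_add (P Q : MvPolynomial (Fin 2) ℝ) : Dθ (P + Q) = Dθ P + Dθ Q := by
  simp [Dθ]
  ring

lemma Dθ_sub (P Q : MvPolynomial (Fin 2) ℝ) : Dθ (P - Q) = Dθ P - Dθ Q := by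
  simp [Dθ]
  ring

lemma Dθ_mul_X0 (P : MvPolynomial (Fin 2) ℝ) :
    Dθ (P * X 0) = Dθ P * X 0 - P * X 1 := by
  simp [Dθ, pderiv_mul, pderiv_X]
  ring

lemma Dθ_mul_X1 (P : MvPolynomial (Fin 2) ℝ) :
    Dθ (P * X 1) = Dθ P * X 1 + P * X 0 := by
  simp [Dθ, pderiv_mul, pderiv_X]
  ring

def gP (P : MvPolynomial (Fin 2) ℝ) : Pt → ℝ := fun q => eval ![c1 q, c2 q] P

lemma gP_C (a : ℝ) : gP (C a) = fun _ => a := by funext q; simp [gP]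
lemma gP_add (P Q : MvPolynomial (Fin 2) ℝ) : gP (P + Q) = fun q => gP P q + gP Q q := by
  funext q; simp [gP]
lemma gP_mul_X0 (P : MvPolynomial (Fin 2) ℝ) : gP (P * X 0) = fun q => gP P q * c1 q := by
  funext q; simp [gP]
lemma gP_mul_X1 (P : MvPolynomial (Fin 2) ℝ) : gP (P * X 1) = fun q => gP P q * c2 q := by
  funext q; simp [gP]

lemma cda_gP (P : MvPolynomial (Fin 2) ℝ) {p : Pt} (hp : rad p ≠ 0) :
    ContDiffAt ℝ 2 (gP P) p := by
  induction P using MvPolynomial.induction_on with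
  | C a => rw [gP_C]; exact contDiffAt_const
  | add P Q ihP ihQ => rw [gP_add]; exact ihP.add ihQ
  | mul_X P i ih =>
    fin_cases i
    · show ContDiffAt ℝ 2 (gP (P * X 0)) p
      rw [gP_mul_X0]
      exact ih.mul (cda_c1 hp)
    · show ContDiffAt ℝ 2 (gP (P * X 1)) p
      rw [gP_mul_X1]
      exact ih.mul (cda_c2 hp)

lemma dTheta_gP (P : MvPolynomial (Fin 2) ℝ) {p : Pt} (hp : rad p ≠ 0) :
    dThetaFull (gP P) p = eval ![c1 p, c2 p] (Dθ P) := by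
  induction P using MvPolynomial.induction_on with
  | C a =>
    rw [gP_C, Dθ_C, dThetaFull]
    simp
  | add P Q ihP ihQ =>
    rw [gP_add, Dθ_add,
      dTheta_add ((cda_gP P hp).differentiableAt two_ne_zero)
        ((cda_gP Q hp).differentiableAt two_ne_zero),
      ihP, ihQ, eval_add]
  | mul_X P i ih =>
    fin_cases i
    · show dThetaFull (gP (P * X 0)) p = eval ![c1 p, c2 p] (Dθ (P * X 0))
      rw [gP_mul_X0,
        dTheta_mul ((cda_gP P hp).differentiableAt two_ne_zero) (diff_c1 hp),
        ih, dTheta_c1 hp, Dθ_mul_X0]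
      simp [gP]
      try ring
    · show dThetaFull (gP (P * X 1)) p = eval ![c1 p, c2 p] (Dθ (P * X 1))
      rw [gP_mul_X1,
        dTheta_mul ((cda_gP P hp).differentiableAt two_ne_zero) (diff_c2 hp),
        ih, dTheta_c2 hp, Dθ_mul_X1]
      simp [gP]
      try ring


section Fpart

variable {Υ : ℝ → ℝ} {h : Pt → ℝ}

/-- the scalar `Υ(r/t) h` -/
def FF (Υ : ℝ → ℝ) (h : Pt → ℝ) : Pt → ℝ := fun q => Υ (rad q / q.1) * h q

lemma cda_phi {p : Pt} (hp : rad p ≠ 0) (ht : p.1 ≠ 0) :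
    ContDiffAt ℝ 2 (fun q : Pt => rad q / q.1) p :=
  (cda_rad hp).div contDiffAt_fst ht

lemma cda_FF (hΥ : ContDiff ℝ (⊤ : ℕ∞) Υ) (hh : ContDiff ℝ (⊤ : ℕ∞) h) {p : Pt}
    (hp : rad p ≠ 0) (ht : p.1 ≠ 0) : ContDiffAt ℝ 2 (FF Υ h) p :=
  (((hΥ.of_le (by exact WithTop.coe_le_coe.mpr (le_top : (2 : ℕ∞) ≤ ⊤))).contDiffAt).comp p (cda_phi hp ht)).mul (hh.of_le (by exact WithTop.coe_le_coe.mpr (le_top : (2 : ℕ∞) ≤ ⊤))).contDiffAt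

lemma dTheta_FF (hΥ : ContDiff ℝ (⊤ : ℕ∞) Υ) (hh : ContDiff ℝ (⊤ : ℕ∞) h) {p : Pt}
    (hp : rad p ≠ 0) (ht : p.1 ≠ 0) :
    dThetaFull (FF Υ h) p = Υ (rad p / p.1) * dThetaFull h p := by
  have hrw : (fun q : Pt => rad q / q.1) = fun q : Pt => rad q * (q.1)⁻¹ := by
    funext q; rw [div_eq_mul_inv]
  have hφ : HasFDerivAt (fun q : Pt => rad q / q.1)
      (rad p • ((-(p.1 ^ 2)⁻¹) • lt)
        + (p.1)⁻¹ • ((1 / (2 * rad p)) • (p.2.1 • lx + p.2.1 • lx + (p.2.2 • ly + p.2.2 • ly)))) p := by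
    rw [hrw]
    exact (hasF_rad hp).mul ((hasDerivAt_inv ht).comp_hasFDerivAt p (hasF_t p))
  have hU : HasDerivAt Υ (deriv Υ (rad p / p.1)) (rad p / p.1) :=
    ((hΥ.differentiable (by simp)) (rad p / p.1)).hasDerivAt
  have hcomp : HasFDerivAt (fun q : Pt => Υ (rad q / q.1))
      (deriv Υ (rad p / p.1) •
        (rad p • ((-(p.1 ^ 2)⁻¹) • lt)
          + (p.1)⁻¹ • ((1 / (2 * rad p)) • (p.2.1 • lx + p.2.1 • lx + (p.2.2 • ly + p.2.2 • ly))))) p :=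
    hU.comp_hasFDerivAt p hφ
  have hmul : dThetaFull (FF Υ h) p
      = dThetaFull (fun q : Pt => Υ (rad q / q.1)) p * h p
        + Υ (rad p / p.1) * dThetaFull h p := by
    exact dTheta_mul hcomp.differentiableAt ((hh.differentiable (by simp)) p)
  rw [hmul, dThetaFull, hcomp.fderiv]
  simp only [ContinuousLinearMap.smul_apply, ContinuousLinearMap.add_apply,
    ContinuousLinearMap.neg_apply, lt_apply, lx_apply, ly_apply, smul_eq_mul]
  ring

/-- The master computation, by induction over trigonometric polynomials. -/
lemma master (P : MvPolynomial (Fin 2) ℝ) (hΥ : ContDiff ℝ (⊤ : ℕ∞) Υ) (hh : ContDiff ℝ (⊤ : ℕ∞) h)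
    {p : Pt} (hp : rad p ≠ 0) (ht : p.1 ≠ 0) :
    Box (fun q => FF Υ h q * gP P q) p
      = Box (FF Υ h) p * eval ![c1 p, c2 p] P
        + Υ (rad p / p.1) / rad p ^ 2 *
          (eval ![c1 p, c2 p] (Dθ (Dθ P)) * h p
            + 2 * eval ![c1 p, c2 p] (Dθ P) * dThetaFull h p) := by
  induction P using MvPolynomial.induction_on with
  | C a =>
    rw [gP_C, Dθ_C, Dθ_zero]
    have h1 : (fun q => FF Υ h q * a) = fun q => FF Υ h q * (fun _ => (a : ℝ)) q := rfl
    rw [h1, Box_mul (cda_FF hΥ hh hp ht) contDiffAt_const]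
    have hz : ∀ v : Pt, pd v (fun _ : Pt => a) = fun _ => (0 : ℝ) := by
      intro v; funext q; simp [pd]
    have hz2 : Box (fun _ : Pt => a) p = 0 := by
      rw [Box, hz e0, hz e1, hz e2]
      have : ∀ v : Pt, pd v (fun _ : Pt => (0:ℝ)) p = 0 := by intro v; simp [pd]
      rw [this, this, this]; ring
    rw [hz e0, hz e1, hz e2, hz2]
    simp only [eval_C, map_zero]
    ring
  | add P Q ihP ihQ =>
    rw [gP_add]
    have h1 : (fun q => FF Υ h q * (gP P q + gP Q q))
        = fun q => (fun q' => FF Υ h q' * gP P q') q + (fun q' => FF Υ h q' * gP Q q') q := by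
      funext q; ring
    have hB : Box (fun q => FF Υ h q * (gP P q + gP Q q)) p
        = Box (fun q => FF Υ h q * gP P q) p + Box (fun q => FF Υ h q * gP Q q) p := by
      rw [h1]
      exact Box_add ((cda_FF hΥ hh hp ht).mul (cda_gP P hp))
        ((cda_FF hΥ hh hp ht).mul (cda_gP Q hp))
    rw [hB, ihP, ihQ, Dθ_add, Dθ_add]
    simp [eval_add]
    ring
  | mul_X P i ih =>
    fin_cases i
    · show Box (fun q => FF Υ h q * gP (P * X 0) q) p
        = Box (FF Υ h) p * eval ![c1 p, c2 p] (P * X 0)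
          + Υ (rad p / p.1) / rad p ^ 2 *
            (eval ![c1 p, c2 p] (Dθ (Dθ (P * X 0))) * h p
              + 2 * eval ![c1 p, c2 p] (Dθ (P * X 0)) * dThetaFull h p)
      have h1 : (fun q => FF Υ h q * gP (P * X 0) q)
          = fun q => (fun q' => FF Υ h q' * gP P q') q * c1 q := by
        funext q; rw [gP_mul_X0]; ring
      have hu : ContDiffAt ℝ 2 (fun q' => FF Υ h q' * gP P q') p :=
        (cda_FF hΥ hh hp ht).mul (cda_gP P hp)
      have hdθ : dThetaFull (fun q' => FF Υ h q' * gP P q') p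
          = Υ (rad p / p.1) * (dThetaFull h p * gP P p + h p * eval ![c1 p, c2 p] (Dθ P)) := by
        rw [dTheta_mul ((cda_FF hΥ hh hp ht).differentiableAt two_ne_zero)
            ((cda_gP P hp).differentiableAt two_ne_zero),
          dTheta_FF hΥ hh hp ht, dTheta_gP P hp]
        simp only [FF]
        ring
      rw [h1, Box_mul_c1 hu hp, ih, hdθ, Dθ_mul_X0, Dθ_sub, Dθ_mul_X0, Dθ_mul_X1]
      simp only [FF, eval_mul, eval_add, eval_sub, eval_X, gP, Matrix.cons_val_zero,
        Matrix.cons_val_one, Matrix.head_cons, c1, c2]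
      field_simp
      ring
    · show Box (fun q => FF Υ h q * gP (P * X 1) q) p
        = Box (FF Υ h) p * eval ![c1 p, c2 p] (P * X 1)
          + Υ (rad p / p.1) / rad p ^ 2 *
            (eval ![c1 p, c2 p] (Dθ (Dθ (P * X 1))) * h p
              + 2 * eval ![c1 p, c2 p] (Dθ (P * X 1)) * dThetaFull h p)
      have h1 : (fun q => FF Υ h q * gP (P * X 1) q)
          = fun q => (fun q' => FF Υ h q' * gP P q') q * c2 q := by
        funext q; rw [gP_mul_X1]; ring
      have hu : ContDiffAt ℝ 2 (fun q' => FF Υ h q' * gP P q') p :=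
        (cda_FF hΥ hh hp ht).mul (cda_gP P hp)
      have hdθ : dThetaFull (fun q' => FF Υ h q' * gP P q') p
          = Υ (rad p / p.1) * (dThetaFull h p * gP P p + h p * eval ![c1 p, c2 p] (Dθ P)) := by
        rw [dTheta_mul ((cda_FF hΥ hh hp ht).differentiableAt two_ne_zero)
            ((cda_gP P hp).differentiableAt two_ne_zero),
          dTheta_FF hΥ hh hp ht, dTheta_gP P hp]
        simp only [FF]
        ring
      rw [h1, Box_mul_c2 hu hp, ih, hdθ, Dθ_mul_X1, Dθ_add, Dθ_mul_X1, Dθ_mul_X0]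
      simp only [FF, eval_mul, eval_add, eval_sub, eval_X, gP, Matrix.cons_val_zero,
        Matrix.cons_val_one, Matrix.head_cons, c1, c2]
      field_simp
      ring

end Fpart

def QQ : Fin 3 → MvPolynomial (Fin 2) ℝ := ![-1, X 0, X 1]

lemma covq_eval (μ : Fin 3) (q : Pt) : covq μ q = eval ![c1 q, c2 q] (QQ μ) := by
  fin_cases μ <;> simp [covq, QQ, c1, c2]

end S14

/-- **Noncommutation of the d'Alembertian with the null decomposition
(formula \eqref{noncom}).** There exist fixed trigonometric polynomials
`u¹_{μν}, u²_{μν}` (polynomials in `cos θ, sin θ`) such that for every smooth cutoff `Υ`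
and every smooth scalar `h`,
`(□(Υ(r/t) h dq²))_{μν} − □(Υ(r/t) h) (dq²)_{μν}
  = Υ(r/t) r^{−2}(u¹_{μν}(θ) h + u²_{μν}(θ) ∂_θ h)`. -/


theorem stmt14 :
    ∃ P1 P2 : Fin 3 → Fin 3 → MvPolynomial (Fin 2) ℝ,
      ∀ (Υ : ℝ → ℝ) (h : Pt → ℝ), ContDiff ℝ (⊤ : ℕ∞) Υ → ContDiff ℝ (⊤ : ℕ∞) h →
      ∀ (μ ν : Fin 3) (t r θ : ℝ), 0 < r → t ≠ 0 →
        Box (fun p' : Pt => Υ (rad p' / p'.1) * h p' * covq μ p' * covq ν p')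
            (t, r * Real.cos θ, r * Real.sin θ)
          - Box (fun p' : Pt => Υ (rad p' / p'.1) * h p')
              (t, r * Real.cos θ, r * Real.sin θ)
            * covq μ (t, r * Real.cos θ, r * Real.sin θ)
            * covq ν (t, r * Real.cos θ, r * Real.sin θ)
        = Υ (r / t) / r ^ 2 *
            (MvPolynomial.eval (![Real.cos θ, Real.sin θ] : Fin 2 → ℝ) (P1 μ ν) *
                h (t, r * Real.cos θ, r * Real.sin θ)
              + MvPolynomial.eval (![Real.cos θ, Real.sin θ] : Fin 2 → ℝ) (P2 μ ν) *
                dThetaFull h (t, r * Real.cos θ, r * Real.sin θ)) := by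
  classical
  refine ⟨fun μ ν => S14.Dθ (S14.Dθ (S14.QQ μ * S14.QQ ν)),
    fun μ ν => MvPolynomial.C 2 * S14.Dθ (S14.QQ μ * S14.QQ ν), ?_⟩
  intro Υ h hΥ hh μ ν t r θ hr ht
  set p₀ : Pt := (t, r * Real.cos θ, r * Real.sin θ) with hp₀
  have hradsq : (r * Real.cos θ) ^ 2 + (r * Real.sin θ) ^ 2 = r ^ 2 := by
    rw [mul_pow, mul_pow, ← mul_add, Real.cos_sq_add_sin_sq, mul_one]
  have hrad : rad p₀ = r := by
    rw [hp₀, rad]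
    show Real.sqrt ((r * Real.cos θ) ^ 2 + (r * Real.sin θ) ^ 2) = r
    rw [hradsq, Real.sqrt_sq hr.le]
  have hp : rad p₀ ≠ 0 := by rw [hrad]; exact hr.ne'
  have ht' : p₀.1 ≠ 0 := ht
  have hc1 : S14.c1 p₀ = Real.cos θ := by
    rw [S14.c1, hrad]
    show r * Real.cos θ / r = _
    field_simp
  have hc2 : S14.c2 p₀ = Real.sin θ := by
    rw [S14.c2, hrad]
    show r * Real.sin θ / r = _
    field_simp
  have hvec : ![S14.c1 p₀, S14.c2 p₀] = ![Real.cos θ, Real.sin θ] := by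
    rw [hc1, hc2]
  have hfun1 : (fun p' : Pt => Υ (rad p' / p'.1) * h p' * covq μ p' * covq ν p')
      = fun q => S14.FF Υ h q * S14.gP (S14.QQ μ * S14.QQ ν) q := by
    funext q
    simp only [S14.FF, S14.gP, MvPolynomial.eval_mul, ← S14.covq_eval]
    ring
  have hfun2 : (fun p' : Pt => Υ (rad p' / p'.1) * h p') = S14.FF Υ h := rfl
  rw [hfun1, hfun2, S14.covq_eval μ, S14.covq_eval ν,
    S14.master (S14.QQ μ * S14.QQ ν) hΥ hh hp ht', hvec, hrad]
  show _ + Υ (r / t) / r ^ 2 * _ - _ = _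
  rw [MvPolynomial.eval_mul]
  simp only [MvPolynomial.eval_mul, MvPolynomial.eval_C]
  ring

end
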